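/- Let d ≥ 1 and τ be integers with 2τ > d, let G be a d-regular simple graph on a finite vertex set V (not necessarily triangle-free), and let {u,v} be an edge of G such that u and v have no common neighbour. Then the number of functions c : V → {a,b} for which the threshold algorithm outputs A_τ(c)(u) ≠ A_τ(c)(v), divided by 2^|V|, equals 1/2 + 4^{-(d-1)} · C(d-1, τ-1) · Σ_{i = d-τ+1}^{τ-1} C(d-1, i). -/

import Mathlib

/-!
Put `A = N(u) \ {v}` and `B = N(v) \ {u}`: disjoint sets of size `d - 1` avoiding `u` and `v`.
The new colours of `u` and `v` depend only on the colours on `{u, v} ∪ A ∪ B`, and once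
`c u = s` and `c v = t` are fixed, the number `X` of vertices of `A` coloured `s` and the
number `Y` of vertices of `B` coloured `t` are independent `Bin(d - 1, 1/2)` variables.
If `s = t` the new colours differ iff exactly one of `X + 1 < τ`, `Y + 1 < τ` holds; if `s ≠ t`
they differ iff both or neither of `X < τ`, `Y < τ` hold. With `p = ℙ(X < τ - 1)` and
`q = ℙ(X < τ)` the probability is `p (1 - p) + (q² + (1 - q)²) / 2 = 1/2 + (q - p)(q + p - 1)`,
where `q - p = C(d-1, τ-1) / 2^(d-1)`, and the symmetry `C(d-1, k) = C(d-1, d-1-k)` turns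
`q + p - 1` into `Σ_{d-τ < i < τ} C(d-1, i) / 2^(d-1)`.
-/

/-- Binomial coefficient with integer lower index, following the convention
`C(n,k) = 0` for `k < 0` (and `k > n`). -/
def chooseZ (n : ℕ) (k : ℤ) : ℕ := if 0 ≤ k then n.choose k.toNat else 0

open Finset

noncomputable def binomProbLt (n m : ℕ) : ℝ := (∑ k ∈ range m, (n.choose k : ℝ)) / 2 ^ n

section Counting

variable {α β : Type*} [Fintype α] [Fintype β]

theorem card_filter_iff_prod (P : α → Prop) (Q : β → Prop) [DecidablePred P]
    [DecidablePred Q] :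
    #{x : α × β | P x.1 ↔ Q x.2} = #{a | P a} * #{b | Q b} + #{a | ¬P a} * #{b | ¬Q b} := by
  classical
  rw [← card_product, ← card_product, ← card_union_of_disjoint, ← filter_product,
    ← filter_product, ← filter_or, univ_product_univ]
  · simp only [iff_iff_and_or_not_and_not]
  · exact disjoint_product.2 (.inl (disjoint_filter_filter_not _ _ _))

theorem card_filter_not_iff_prod (P : α → Prop) (Q : β → Prop) [DecidablePred P]
    [DecidablePred Q] :
    #{x : α × β | ¬(P x.1 ↔ Q x.2)} =
      #{a | P a} * #{b | ¬Q b} + #{a | ¬P a} * #{b | Q b} := by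
  simp only [not_iff]
  rw [card_filter_iff_prod (fun a => ¬P a) Q]
  simp only [not_not, add_comm]

variable [DecidableEq α] [DecidableEq β]

theorem card_filter_card_filter_eq (s : Bool) (k : ℕ) :
    #{f : α → Bool | #{a | f a = s} = k} = (Fintype.card α).choose k := by
  let e : (α → Bool) ≃ Finset α :=
    { toFun f := {a | f a = s}
      invFun S a := if a ∈ S then s else !s
      left_inv f := funext fun a => by by_cases h : f a = s <;> cases s <;> simp_all
      right_inv S := by ext a; by_cases h : a ∈ S <;> simp [h] }
  rw [← card_univ, ← card_powersetCard, card_equiv e]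
  simp [e]

theorem card_filter_card_filter_lt (s : Bool) (m : ℕ) :
    #{f : α → Bool | #{a | f a = s} < m} = ∑ k ∈ range m, (Fintype.card α).choose k := by
  rw [card_eq_sum_card_fiberwise (f := fun f : α → Bool => #{a | f a = s}) (t := range m)
    fun f hf => by simpa using hf]
  refine sum_congr rfl fun k hk => ?_
  rw [filter_filter, ← card_filter_card_filter_eq s k]
  congr 1
  exact filter_congr fun f _ => by grind

theorem card_filter_card_filter_lt_div (s : Bool) (m : ℕ) :
    (#{f : α → Bool | #{a | f a = s} < m} : ℝ) / 2 ^ Fintype.card α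
      = binomProbLt (Fintype.card α) m := by
  rw [card_filter_card_filter_lt, binomProbLt]
  push_cast
  rfl

theorem card_filter_not_card_filter_lt_div (s : Bool) (m : ℕ) :
    (#{f : α → Bool | ¬#{a | f a = s} < m} : ℝ) / 2 ^ Fintype.card α
      = 1 - binomProbLt (Fintype.card α) m := by
  have h := card_filter_add_card_filter_not (s := univ) (fun f : α → Bool => #{a | f a = s} < m)
  rw [card_univ, Fintype.card_fun, Fintype.card_bool] at h
  rw [← card_filter_card_filter_lt_div s m, eq_sub_iff_add_eq, ← add_div,
    div_eq_one_iff_eq (by positivity)]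
  exact_mod_cast (add_comm _ _).trans h

theorem Bool.ite_ne_ite_iff (p q : Prop) [Decidable p] [Decidable q] (s t : Bool) :
    ((if p then s else !s) ≠ if q then t else !t) ↔ (s = t ↔ ¬(p ↔ q)) := by
  by_cases p <;> by_cases q <;> cases s <;> cases t <;> simp_all

theorem card_filter_threshold_ne_prod (τ : ℕ) (s t : Bool) :
    (#{x : (α → Bool) × (β → Bool) |
        (if #{a | x.1 a = s} + (if t = s then 1 else 0) < τ then s else !s) ≠
          if #{b | x.2 b = t} + (if s = t then 1 else 0) < τ then t else !t} : ℝ)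
      / (2 ^ Fintype.card α * 2 ^ Fintype.card β) =
    if s = t then
      binomProbLt (Fintype.card α) (τ - 1) * (1 - binomProbLt (Fintype.card β) (τ - 1))
        + (1 - binomProbLt (Fintype.card α) (τ - 1)) * binomProbLt (Fintype.card β) (τ - 1)
    else
      binomProbLt (Fintype.card α) τ * binomProbLt (Fintype.card β) τ
        + (1 - binomProbLt (Fintype.card α) τ) * (1 - binomProbLt (Fintype.card β) τ) := by
  simp_rw [Bool.ite_ne_ite_iff, eq_comm (a := t)]
  by_cases hst : s = t
  · subst hst
    simp only [if_true, true_iff, ← Nat.lt_sub_iff_add_lt]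
    rw [card_filter_not_iff_prod (fun f : α → Bool => #{a | f a = s} < τ - 1)
      (fun g : β → Bool => #{b | g b = s} < τ - 1)]
    rw [← card_filter_not_card_filter_lt_div s, ← card_filter_not_card_filter_lt_div s,
      ← card_filter_card_filter_lt_div s, ← card_filter_card_filter_lt_div s]
    push_cast
    ring
  · simp only [hst, if_false, false_iff, not_not, add_zero]
    rw [card_filter_iff_prod (fun f : α → Bool => #{a | f a = s} < τ)
      (fun g : β → Bool => #{b | g b = t} < τ)]
    rw [← card_filter_not_card_filter_lt_div s, ← card_filter_not_card_filter_lt_div t,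
      ← card_filter_card_filter_lt_div s, ← card_filter_card_filter_lt_div t]
    push_cast
    ring

end Counting

section Split

variable {V : Type*} [DecidableEq V] {u v : V} {A B : Finset V}

theorem card_filter_insert_eq {β : Type*} [DecidableEq β] (hvA : v ∉ A) (c : V → β)
    (s : β) :
    #{y ∈ insert v A | c y = s} = #{a : A | c a = s} + if c v = s then 1 else 0 := by
  rw [filter_insert]
  have hA : #{a : A | c a = s} = #{y ∈ A | c y = s} := by
    rw [univ_eq_attach, filter_attach (fun y => c y = s), card_map, card_attach]
  split_ifs
  · rw [card_insert_of_notMem fun h => hvA (mem_filter.1 h).1, hA]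
  · rw [hA, add_zero]

def splitFunEquiv (β : Type*) (huv : u ≠ v) (huA : u ∉ A) (hvA : v ∉ A) (huB : u ∉ B)
    (hvB : v ∉ B) (hAB : Disjoint A B) :
    (V → β) ≃ ((β × β) × ((A → β) × (B → β))) ×
      ({x // x ≠ u ∧ x ≠ v ∧ x ∉ A ∧ x ∉ B} → β) where
  toFun c := (((c u, c v), (fun a => c a, fun b => c b)), fun x => c x)
  invFun z x :=
    if hu : x = u then z.1.1.1 else
    if hv : x = v then z.1.1.2 else
    if hA : x ∈ A then z.1.2.1 ⟨x, hA⟩ else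
    if hB : x ∈ B then z.1.2.2 ⟨x, hB⟩ else
    z.2 ⟨x, hu, hv, hA, hB⟩
  left_inv c := by
    funext x
    dsimp only
    split_ifs with hu hv <;> first | subst hu; rfl | subst hv; rfl | rfl
  right_inv := by
    rintro ⟨⟨⟨s, t⟩, f, g⟩, r⟩
    have hA (a : A) : (a : V) ≠ u ∧ (a : V) ≠ v :=
      ⟨ne_of_mem_of_not_mem a.2 huA, ne_of_mem_of_not_mem a.2 hvA⟩
    have hB (b : B) : (b : V) ≠ u ∧ (b : V) ≠ v ∧ (b : V) ∉ A :=
      ⟨ne_of_mem_of_not_mem b.2 huB, ne_of_mem_of_not_mem b.2 hvB, disjoint_right.1 hAB b.2⟩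
    refine Prod.ext (Prod.ext (Prod.ext ?_ ?_) (Prod.ext ?_ ?_)) ?_
    · exact dif_pos rfl
    · exact (dif_neg huv.symm).trans (dif_pos rfl)
    · funext a
      exact (dif_neg (hA a).1).trans <| (dif_neg (hA a).2).trans (dif_pos a.2)
    · funext b
      exact (dif_neg (hB b).1).trans <| (dif_neg (hB b).2.1).trans <|
        (dif_neg (hB b).2.2).trans (dif_pos b.2)
    · funext x
      exact (dif_neg x.2.1).trans <| (dif_neg x.2.2.1).trans <|
        (dif_neg x.2.2.2.1).trans (dif_neg x.2.2.2.2)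

theorem card_filter_splitFun [Fintype V] {β : Type*} [Fintype β] [DecidableEq β] (huv : u ≠ v)
    (huA : u ∉ A) (hvA : v ∉ A) (huB : u ∉ B) (hvB : v ∉ B) (hAB : Disjoint A B)
    (Q : (β × β) × ((A → β) × (B → β)) → Prop) [DecidablePred Q] :
    #{c : V → β | Q ((c u, c v), (fun a => c a, fun b => c b))} =
      #{z | Q z} * Fintype.card ({x // x ≠ u ∧ x ≠ v ∧ x ∉ A ∧ x ∉ B} → β) := by
  rw [← card_univ, ← card_product, ← filter_product_left, univ_product_univ]
  exact card_equiv (splitFunEquiv β huv huA hvA huB hvB hAB) fun c => by simp [splitFunEquiv]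

theorem card_filter_threshold_ne_div [Fintype V] (τ : ℕ) (huv : u ≠ v) (huA : u ∉ A)
    (hvA : v ∉ A) (huB : u ∉ B) (hvB : v ∉ B) (hAB : Disjoint A B) :
    (#{c : V → Bool | (if #{y ∈ insert v A | c y = c u} < τ then c u else !c u) ≠
        if #{y ∈ insert u B | c y = c v} < τ then c v else !c v} : ℝ) / 2 ^ Fintype.card V =
      (binomProbLt #A (τ - 1) * (1 - binomProbLt #B (τ - 1))
        + (1 - binomProbLt #A (τ - 1)) * binomProbLt #B (τ - 1)
        + binomProbLt #A τ * binomProbLt #B τ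
        + (1 - binomProbLt #A τ) * (1 - binomProbLt #B τ)) / 2 := by
  let Q : (Bool × Bool) × ((A → Bool) × (B → Bool)) → Prop := fun z =>
    (if #{a | z.2.1 a = z.1.1} + (if z.1.2 = z.1.1 then 1 else 0) < τ then z.1.1 else !z.1.1) ≠
      if #{b | z.2.2 b = z.1.2} + (if z.1.1 = z.1.2 then 1 else 0) < τ then z.1.2 else !z.1.2
  have hprob (s t : Bool) : (#{fg | Q ((s, t), fg)} : ℝ) / (2 ^ #A * 2 ^ #B) =
      if s = t then
        binomProbLt #A (τ - 1) * (1 - binomProbLt #B (τ - 1))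
          + (1 - binomProbLt #A (τ - 1)) * binomProbLt #B (τ - 1)
      else
        binomProbLt #A τ * binomProbLt #B τ
          + (1 - binomProbLt #A τ) * (1 - binomProbLt #B τ) := by
    simpa only [Fintype.card_coe] using card_filter_threshold_ne_prod (α := A) (β := B) τ s t
  have hcard : (2 : ℝ) ^ Fintype.card V =
      2 * 2 * (2 ^ #A * 2 ^ #B) *
        Fintype.card ({x // x ≠ u ∧ x ≠ v ∧ x ∉ A ∧ x ∉ B} → Bool) := by
    have h := Fintype.card_congr (splitFunEquiv Bool huv huA hvA huB hvB hAB)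
    simp only [Fintype.card_fun, Fintype.card_prod, Fintype.card_bool, Fintype.card_coe] at h
    rw [Fintype.card_fun, Fintype.card_bool]
    exact_mod_cast h
  have hsum : #{z | Q z} = ∑ st : Bool × Bool, #{fg | Q (st, fg)} := by
    simp only [card_filter, Fintype.sum_prod_type]
  simp only [card_filter_insert_eq hvA, card_filter_insert_eq huB]
  rw [card_filter_splitFun huv huA hvA huB hvB hAB Q, hcard, Nat.cast_mul,
    mul_div_mul_right _ _ (Nat.cast_ne_zero.2 Fintype.card_ne_zero), hsum, Nat.cast_sum,
    Fintype.sum_prod_type]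
  simp only [Fintype.sum_bool]
  rw [mul_comm (2 * 2 : ℝ), ← div_div]
  simp only [add_div, hprob, if_true, Bool.true_eq_false, Bool.false_eq_true, if_false]
  ring

end Split

theorem sum_Ico_chooseZ (n : ℕ) (a b : ℤ) :
    ∑ i ∈ Ico a b, chooseZ n i = ∑ k ∈ Ico a.toNat b.toNat, n.choose k := by
  have hsub : (Ico a.toNat b.toNat).map Nat.castEmbedding ⊆ Ico a b := by
    intro i hi
    obtain ⟨k, hk, rfl⟩ := mem_map.1 hi
    simp only [mem_Ico, Nat.castEmbedding_apply] at hk ⊢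
    omega
  rw [← sum_subset hsub, sum_map]
  · simp [chooseZ]
  · intro i hi hni
    have hneg : ¬0 ≤ i := fun h => hni <|
      mem_map.2 ⟨i.toNat, by simp only [mem_Ico] at hi ⊢; omega, by simp [h]⟩
    simp [chooseZ, hneg]

theorem Nat.sum_range_choose_add_sum_range_choose_sub (n m : ℕ) :
    ∑ k ∈ range m, n.choose k + ∑ k ∈ range (n + 1 - m), n.choose k = 2 ^ n := by
  rcases le_or_gt m (n + 1) with hm | hm
  · have hreflect :
        ∑ k ∈ range (n + 1 - m), n.choose k = ∑ k ∈ Ico m (n + 1), n.choose k := by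
      rw [range_eq_Ico, ← sum_congr rfl fun k hk => Nat.choose_symm (by simp at hk; omega),
        sum_Ico_reflect _ _ (by omega), Nat.sub_sub_self hm, Nat.sub_zero]
    rw [hreflect, sum_range_add_sum_Ico _ hm, Nat.sum_range_choose]
  · rw [Nat.sub_eq_zero_of_le hm.le, ← sum_range_add_sum_Ico _ hm.le, Nat.sum_range_choose,
      sum_eq_zero fun k hk => Nat.choose_eq_zero_of_lt (by simp at hk; omega)]
    simp

theorem Nat.two_mul_sum_range_choose (n m : ℕ) (hm : 1 ≤ m) (h : n + 1 < 2 * m) :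
    2 * ∑ k ∈ range m, n.choose k =
      2 ^ n + ∑ k ∈ Ico (n + 2 - m) m, n.choose k + n.choose (m - 1) := by
  have hlow : ∑ k ∈ range (n + 2 - m), n.choose k =
      ∑ k ∈ range (n + 1 - m), n.choose k + n.choose (m - 1) := by
    rcases le_or_gt m (n + 1) with hmn | hmn
    · rw [show n + 2 - m = n + 1 - m + 1 by omega, sum_range_succ,
        Nat.choose_symm_of_eq_add (a := n + 1 - m) (b := m - 1) (by omega)]
    · rw [show n + 2 - m = 0 by omega, show n + 1 - m = 0 by omega,
        Nat.choose_eq_zero_of_lt (by omega)]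
      simp
  have hsplit := sum_range_add_sum_Ico (fun k => n.choose k) (show n + 2 - m ≤ m by omega)
  have htotal := Nat.sum_range_choose_add_sum_range_choose_sub n m
  omega

theorem threshold_disagreement_prob (d τ : ℕ) (hd : 1 ≤ d) (hτ : d < 2 * τ) :
    (binomProbLt (d - 1) (τ - 1) * (1 - binomProbLt (d - 1) (τ - 1))
        + (1 - binomProbLt (d - 1) (τ - 1)) * binomProbLt (d - 1) (τ - 1)
        + binomProbLt (d - 1) τ * binomProbLt (d - 1) τ
        + (1 - binomProbLt (d - 1) τ) * (1 - binomProbLt (d - 1) τ)) / 2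
      = 1/2 + (chooseZ (d-1) ((τ : ℤ) - 1) : ℝ) / 4 ^ (d-1)
        * ∑ i ∈ Finset.Icc ((d : ℤ) - τ + 1) ((τ : ℤ) - 1), (chooseZ (d-1) i : ℝ) := by
  obtain ⟨n, rfl⟩ : ∃ n, d = n + 1 := ⟨d - 1, by omega⟩
  have hsucc : ∑ k ∈ range τ, (n.choose k : ℝ) =
      ∑ k ∈ range (τ - 1), (n.choose k : ℝ) + n.choose (τ - 1) := by
    rw [← sum_range_succ, Nat.sub_add_cancel (by omega)]
  have hkey : (2 : ℝ) * ∑ k ∈ range τ, (n.choose k : ℝ) =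
      2 ^ n + ∑ k ∈ Ico (n + 2 - τ) τ, (n.choose k : ℝ) + n.choose (τ - 1) := by
    exact_mod_cast Nat.two_mul_sum_range_choose n τ (by omega) hτ
  rw [Icc_sub_one_right_eq_Ico, ← Nat.cast_sum, sum_Ico_chooseZ, chooseZ, if_pos (by omega),
    show ((n + 1 : ℕ) - τ + 1 : ℤ).toNat = n + 2 - τ by omega, Int.toNat_natCast,
    show ((τ : ℤ) - 1).toNat = τ - 1 by omega, Nat.add_sub_cancel,
    show (4 : ℝ) ^ n = 2 ^ n * 2 ^ n by rw [← mul_pow]; norm_num]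
  simp only [binomProbLt]
  rw [hsucc] at hkey ⊢
  push_cast
  field_simp
  linear_combination 2 * (n.choose (τ - 1) : ℝ) * hkey

theorem stmt16 {V : Type*} [Fintype V] [DecidableEq V]
    (d τ : ℕ) (hd : 1 ≤ d) (hτ : d < 2 * τ)
    (G : SimpleGraph V) [DecidableRel G.Adj]
    (hreg : G.IsRegularOfDegree d)
    (u v : V) (huv : G.Adj u v)
    (hcn : ∀ w : V, ¬(G.Adj u w ∧ G.Adj v w)) :
    ((Finset.univ.filter (fun c : V → Bool =>
        (if ((G.neighborFinset u).filter (fun y => c y = c u)).card < τ then c u else !(c u))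
        ≠ (if ((G.neighborFinset v).filter (fun y => c y = c v)).card < τ then c v else !(c v)))).card : ℝ)
      / 2 ^ (Fintype.card V)
    = 1/2 + (chooseZ (d-1) ((τ : ℤ) - 1) : ℝ) / 4 ^ (d-1)
        * ∑ i ∈ Finset.Icc ((d : ℤ) - τ + 1) ((τ : ℤ) - 1), (chooseZ (d-1) i : ℝ) := by
  have hvN : v ∈ G.neighborFinset u := (G.mem_neighborFinset u v).2 huv
  have huN : u ∈ G.neighborFinset v := (G.mem_neighborFinset v u).2 huv.symm
  have hA : #((G.neighborFinset u).erase v) = d - 1 := by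
    rw [card_erase_of_mem hvN, G.card_neighborFinset_eq_degree, hreg u]
  have hB : #((G.neighborFinset v).erase u) = d - 1 := by
    rw [card_erase_of_mem huN, G.card_neighborFinset_eq_degree, hreg v]
  have huA : u ∉ (G.neighborFinset u).erase v := fun h =>
    G.notMem_neighborFinset_self u (mem_of_mem_erase h)
  have hvB : v ∉ (G.neighborFinset v).erase u := fun h =>
    G.notMem_neighborFinset_self v (mem_of_mem_erase h)
  have hAB : Disjoint ((G.neighborFinset u).erase v) ((G.neighborFinset v).erase u) :=
    disjoint_left.2 fun w hwA hwB => hcn w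
      ⟨(G.mem_neighborFinset u w).1 (mem_of_mem_erase hwA),
        (G.mem_neighborFinset v w).1 (mem_of_mem_erase hwB)⟩
  rw [← insert_erase hvN, ← insert_erase huN, card_filter_threshold_ne_div τ (G.ne_of_adj huv)
    huA (notMem_erase v _) (notMem_erase u _) hvB hAB, hA, hB]
  exact threshold_disagreement_prob d τ hd hτ
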